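/- For χ > 1 and integer n ≥ 0, Q_{n−1/2}(χ) behaves like a constant multiple of χ^{−n−1/2} as χ → ∞; precisely, lim_{χ→∞} χ^{n+1/2} Q_{n−1/2}(χ) exists, is finite and positive. -/

import Mathlib

open Real Filter

noncomputable def legendreQhalf (n : ℤ) (χ : ℝ) : ℝ :=
  ∫ φ in (0:ℝ)..π, Real.cos (n * φ) / Real.sqrt (2 * (χ - Real.cos φ))

/-- Taylor coefficients of `(1-x)^{-(m+1/2)}` at 0. -/
noncomputable def tcoef : ℕ → ℕ → ℝ
  | _, 0 => 1
  | m, (j+1) => ((m : ℝ) + 1/2) * tcoef (m+1) j / (j+1)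

lemma tcoef_pos : ∀ j m, 0 < tcoef m j := by
  intro j
  induction j with
  | zero => intro m; simp [tcoef]
  | succ j ih =>
    intro m
    have h1 : (0:ℝ) < (m:ℝ) + 1/2 := by positivity
    have h2 := ih (m+1)
    have h3 : (0:ℝ) < (j:ℝ) + 1 := by positivity
    simp only [tcoef]
    positivity

noncomputable def gfun (m : ℕ) (x : ℝ) : ℝ := (1 - x) ^ (-((m : ℝ) + 1/2))

lemma gfun_hasDerivAt (m : ℕ) {x : ℝ} (hx : x < 1) :
    HasDerivAt (gfun m) (((m : ℝ) + 1/2) * gfun (m+1) x) x := by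
  have h1 : (1 : ℝ) - x ≠ 0 := by linarith
  have h := (Real.hasDerivAt_rpow_const (x := 1 - x) (p := -((m : ℝ) + 1/2))
      (Or.inl h1)).comp x ((hasDerivAt_const x (1:ℝ)).sub (hasDerivAt_id x))
  refine h.congr_deriv ?_
  simp only [gfun]
  have he : -((m : ℝ) + 1/2) - 1 = -(((m+1 : ℕ) : ℝ) + 1/2) := by push_cast; ring
  rw [← he]
  ring

lemma gfun_zero (m : ℕ) : gfun m 0 = 1 := by simp [gfun]

lemma gfun_le (m : ℕ) {x : ℝ} (hx : |x| ≤ 1/2) : gfun m x ≤ 2 ^ ((m : ℝ) + 1/2) := by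
  have h1 : (0:ℝ) < 1/2 := by norm_num
  have h2 : (1:ℝ)/2 ≤ 1 - x := by
    rcases abs_le.1 hx with ⟨h, h'⟩; linarith
  have := Real.rpow_le_rpow_of_nonpos h1 h2 (z := -((m : ℝ) + 1/2)) (neg_nonpos.2 (by positivity))
  calc gfun m x ≤ ((1:ℝ)/2) ^ (-((m : ℝ) + 1/2)) := this
    _ = 2 ^ ((m : ℝ) + 1/2) := by
        rw [one_div, Real.inv_rpow (by norm_num), Real.rpow_neg (by norm_num), inv_inv]


noncomputable def Pfun (m k : ℕ) (x : ℝ) : ℝ := ∑ j ∈ Finset.range (k+1), tcoef m j * x ^ j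

lemma Pfun_zero_eq (m k : ℕ) : Pfun m k 0 = 1 := by
  rw [Pfun]
  rw [Finset.sum_eq_single 0]
  · simp [tcoef]
  · intro j _ hj; simp [zero_pow hj]
  · simp

lemma Pfun_hasDerivAt (m k : ℕ) (x : ℝ) :
    HasDerivAt (Pfun m (k+1)) (((m : ℝ) + 1/2) * Pfun (m+1) k x) x := by
  have h : HasDerivAt (Pfun m (k+1))
      (∑ j ∈ Finset.range (k+2), tcoef m j * ((j : ℝ) * x ^ (j-1))) x := by
    apply HasDerivAt.fun_sum
    intro j _
    exact (hasDerivAt_pow j x).const_mul (tcoef m j)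
  convert h using 1
  rw [Finset.sum_range_succ' (fun j => tcoef m j * ((j:ℝ) * x ^ (j-1))) (k+1)]
  simp only [Nat.cast_zero, zero_mul, mul_zero, pow_zero, add_zero, Nat.cast_add, Nat.cast_one,
    Nat.add_sub_cancel]
  rw [Pfun, Finset.mul_sum]
  apply Finset.sum_congr rfl
  intro j _
  have : tcoef m (j+1) = ((m : ℝ) + 1/2) * tcoef (m+1) j / (j+1) := rfl
  rw [this]
  have hj : ((j:ℝ)+1) ≠ 0 := by positivity
  field_simp
open Real Filter

lemma abs_of_mem_uIcc {x t : ℝ} (ht : t ∈ Set.uIcc 0 x) : |t| ≤ |x| := by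
  rcases le_total 0 x with h | h
  · rw [Set.uIcc_of_le h] at ht
    rw [abs_of_nonneg h]
    exact abs_le.2 ⟨by linarith [ht.1], ht.2⟩
  · rw [Set.uIcc_of_ge h] at ht
    rw [abs_of_nonpos h]
    exact abs_le.2 ⟨by linarith [ht.1], by linarith [ht.2]⟩

lemma mvt_bound {f f' : ℝ → ℝ} {x D : ℝ} (hf : ∀ t ∈ Set.uIcc 0 x, HasDerivAt f (f' t) t)
    (hb : ∀ t ∈ Set.uIcc 0 x, |f' t| ≤ D) (h0 : f 0 = 0) : |f x| ≤ D * |x| := by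
  have := Convex.norm_image_sub_le_of_norm_hasDerivWithin_le (f := f) (f' := f')
    (s := Set.uIcc 0 x) (fun t ht => (hf t ht).hasDerivWithinAt) hb (convex_uIcc 0 x)
    Set.left_mem_uIcc Set.right_mem_uIcc
  simpa [h0] using this

lemma taylor_bound : ∀ k m : ℕ, ∃ C : ℝ, 0 ≤ C ∧
    ∀ x : ℝ, |x| ≤ 1/2 → |gfun m x - Pfun m k x| ≤ C * |x| ^ (k+1) := by
  intro k
  induction k with
  | zero =>
    intro m
    refine ⟨((m : ℝ) + 1/2) * 2 ^ (((m+1 : ℕ) : ℝ) + 1/2), by positivity, ?_⟩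
    intro x hx
    have key : |(fun y => gfun m y - Pfun m 0 y) x| ≤ (((m : ℝ) + 1/2) * 2 ^ (((m+1 : ℕ) : ℝ) + 1/2)) * |x| := by
      refine mvt_bound (f := fun y => gfun m y - Pfun m 0 y) (f' := fun t => ((m : ℝ) + 1/2) * gfun (m+1) t) ?_ ?_ ?_
      · intro t ht
        have h1 : |t| ≤ 1/2 := le_trans (abs_of_mem_uIcc ht) hx
        have h2 : t < 1 := by
          rcases abs_le.1 h1 with ⟨_, h⟩; linarith
        have hP : HasDerivAt (fun y => Pfun m 0 y) 0 t := by
          have : (fun y : ℝ => Pfun m 0 y) = fun _ => (1:ℝ) := by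
            funext y; simp [Pfun, tcoef]
          rw [this]; exact hasDerivAt_const t 1
        simpa using (gfun_hasDerivAt m h2).fun_sub hP
      · intro t ht
        have h1 : |t| ≤ 1/2 := le_trans (abs_of_mem_uIcc ht) hx
        have hpos : 0 < gfun (m+1) t := by
          apply Real.rpow_pos_of_pos
          rcases abs_le.1 h1 with ⟨_, h⟩; linarith
        rw [abs_mul, abs_of_pos hpos, abs_of_pos (by positivity : (0:ℝ) < (m : ℝ) + 1/2)]
        exact mul_le_mul_of_nonneg_left (gfun_le (m+1) h1) (by positivity)
      · rw [gfun_zero, Pfun_zero_eq]; ring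
    simpa using key
  | succ k ih =>
    intro m
    obtain ⟨C, hC, hbound⟩ := ih (m+1)
    refine ⟨((m : ℝ) + 1/2) * C, by positivity, ?_⟩
    intro x hx
    have key : |(fun y => gfun m y - Pfun m (k+1) y) x| ≤ (((m : ℝ) + 1/2) * C * |x| ^ (k+1)) * |x| := by
      refine mvt_bound (f := fun y => gfun m y - Pfun m (k+1) y) (f' := fun t => ((m : ℝ) + 1/2) * (gfun (m+1) t - Pfun (m+1) k t)) ?_ ?_ ?_
      · intro t ht
        have h1 : |t| ≤ 1/2 := le_trans (abs_of_mem_uIcc ht) hx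
        have h2 : t < 1 := by rcases abs_le.1 h1 with ⟨_, h⟩; linarith
        have hg := gfun_hasDerivAt m h2
        have hP := Pfun_hasDerivAt m k t
        have := hg.fun_sub hP
        refine this.congr_deriv ?_
        ring
      · intro t ht
        have h1 : |t| ≤ 1/2 := le_trans (abs_of_mem_uIcc ht) hx
        rw [abs_mul, abs_of_pos (by positivity : (0:ℝ) < (m : ℝ) + 1/2)]
        have h3 : |gfun (m+1) t - Pfun (m+1) k t| ≤ C * |t| ^ (k+1) := hbound t h1
        have h4 : |t| ^ (k+1) ≤ |x| ^ (k+1) :=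
          pow_le_pow_left₀ (abs_nonneg t) (abs_of_mem_uIcc ht) (k+1)
        calc ((m : ℝ) + 1/2) * |gfun (m+1) t - Pfun (m+1) k t|
            ≤ ((m : ℝ) + 1/2) * (C * |t| ^ (k+1)) := by
              exact mul_le_mul_of_nonneg_left h3 (by positivity)
          _ ≤ ((m : ℝ) + 1/2) * C * |x| ^ (k+1) := by
              rw [mul_assoc]
              exact mul_le_mul_of_nonneg_left (mul_le_mul_of_nonneg_left h4 hC) (by positivity)
      · rw [gfun_zero, Pfun_zero_eq]; ring
    calc |gfun m x - Pfun m (k+1) x| ≤ (((m : ℝ) + 1/2) * C * |x| ^ (k+1)) * |x| := key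
      _ = ((m : ℝ) + 1/2) * C * |x| ^ (k+1+1) := by ring
noncomputable def Jint (n j : ℕ) : ℝ := ∫ φ in (0:ℝ)..π, Real.cos (n*φ) * (Real.cos φ)^j

lemma Jint_cont (n j : ℕ) : Continuous (fun φ : ℝ => Real.cos (n*φ) * (Real.cos φ)^j) := by
  fun_prop

lemma Jint_zero_of_pos {n : ℕ} (hn : 1 ≤ n) : Jint n 0 = 0 := by
  have hne : ((n:ℝ)) ≠ 0 := by positivity
  rw [Jint]
  simp only [pow_zero, mul_one]
  rw [intervalIntegral.integral_comp_mul_left Real.cos hne]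
  simp [integral_cos, Real.sin_nat_mul_pi]

lemma Jint_zero_zero : Jint 0 0 = π := by
  simp [Jint]

lemma Jint_rec {n : ℕ} (hn : 1 ≤ n) (j : ℕ) :
    Jint n (j+1) = (Jint (n+1) j + Jint (n-1) j) / 2 := by
  have hcast : ((n - 1 : ℕ) : ℝ) = (n : ℝ) - 1 := by
    rw [Nat.cast_sub hn]; simp
  have key : ∀ φ : ℝ, Real.cos (n*φ) * (Real.cos φ)^(j+1) =
      (Real.cos ((n+1 : ℕ)*φ) * (Real.cos φ)^j + Real.cos ((n-1 : ℕ)*φ) * (Real.cos φ)^j) / 2 := by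
    intro φ
    have h := Real.cos_add_cos (((n:ℝ)+1)*φ) (((n:ℝ)-1)*φ)
    have h1 : (((n:ℝ)+1)*φ + ((n:ℝ)-1)*φ)/2 = n*φ := by ring
    have h2 : (((n:ℝ)+1)*φ - ((n:ℝ)-1)*φ)/2 = φ := by ring
    rw [h1, h2] at h
    push_cast [hcast]
    linear_combination (-(Real.cos φ ^ j) / 2) * h
  rw [Jint, intervalIntegral.integral_congr (g := fun φ =>
      (Real.cos ((n+1 : ℕ)*φ) * (Real.cos φ)^j + Real.cos ((n-1 : ℕ)*φ) * (Real.cos φ)^j) / 2)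
      (fun φ _ => key φ)]
  rw [intervalIntegral.integral_div, intervalIntegral.integral_add
      ((Jint_cont (n+1) j).intervalIntegrable 0 π) ((Jint_cont (n-1) j).intervalIntegrable 0 π)]
  rfl

lemma Jint_zero_rec (j : ℕ) : Jint 0 (j+1) = Jint 1 j := by
  rw [Jint, Jint]
  apply intervalIntegral.integral_congr
  intro φ _
  simp [pow_succ]
  ring

lemma Jint_main : ∀ j : ℕ, (∀ n : ℕ, j < n → Jint n j = 0) ∧ (Jint j j = π / 2 ^ j) := by
  intro j
  induction j with
  | zero =>
    constructor
    · intro n hn; exact Jint_zero_of_pos hn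
    · simpa using Jint_zero_zero
  | succ j ih =>
    obtain ⟨ih0, ihs⟩ := ih
    constructor
    · intro n hn
      have hn1 : 1 ≤ n := by omega
      rw [Jint_rec hn1 j]
      rw [ih0 (n+1) (by omega), ih0 (n-1) (by omega)]
      norm_num
    · rw [Jint_rec (by omega) j]
      have e1 : j + 1 + 1 = j + 2 := rfl
      rw [ih0 (j+1+1) (by omega)]
      have : j + 1 - 1 = j := rfl
      rw [this, ihs]
      rw [pow_succ]
      ring

lemma gfun_cont {χ : ℝ} (hχ : 2 ≤ χ) (m : ℕ) :
    Continuous (fun φ : ℝ => gfun m (Real.cos φ / χ)) := by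
  have hχ0 : (0:ℝ) < χ := by linarith
  rw [continuous_iff_continuousAt]
  intro φ
  have hy : Real.cos φ / χ < 1 := by
    have h1 : Real.cos φ ≤ 1 := Real.cos_le_one φ
    rw [div_lt_one hχ0]; linarith
  have hbase : (1 : ℝ) - Real.cos φ / χ ≠ 0 := by linarith
  have h1 : ContinuousAt (fun y : ℝ => gfun m y) (Real.cos φ / χ) := by
    unfold gfun
    exact (Real.continuousAt_rpow_const _ _ (Or.inl hbase)).comp
      ((continuous_const.sub continuous_id).continuousAt)
  have h2 : Continuous fun φ : ℝ => Real.cos φ / χ := by fun_prop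
  exact ContinuousAt.comp (f := fun φ : ℝ => Real.cos φ / χ) h1 h2.continuousAt

lemma main_est (n : ℕ) : ∃ K : ℝ, 0 ≤ K ∧ ∀ χ : ℝ, 2 ≤ χ →
    |χ ^ ((n:ℝ) + 1/2) * legendreQhalf n χ - (π / 2^n * tcoef 0 n) / Real.sqrt 2| ≤ K / χ := by
  obtain ⟨C, hC, hCb⟩ := taylor_bound n 0
  refine ⟨C * π, by positivity, ?_⟩
  intro χ hχ
  have hχ0 : (0:ℝ) < χ := by linarith
  have hχne : χ ≠ 0 := ne_of_gt hχ0
  -- basic bounds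
  have hy : ∀ φ : ℝ, |Real.cos φ / χ| ≤ 1/2 := by
    intro φ
    rw [abs_div, abs_of_pos hχ0, div_le_iff₀ hχ0]
    calc |Real.cos φ| ≤ 1 := Real.abs_cos_le_one φ
      _ ≤ 1/2 * χ := by linarith
  have hbase : ∀ φ : ℝ, (1:ℝ)/2 ≤ 1 - Real.cos φ / χ := by
    intro φ
    rcases abs_le.1 (hy φ) with ⟨h1, h2⟩; linarith
  -- pointwise rewriting of the integrand
  have hpt : ∀ φ : ℝ, Real.cos ((n:ℝ) * φ) / Real.sqrt (2 * (χ - Real.cos φ)) =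
      (Real.sqrt (2*χ))⁻¹ * (Real.cos ((n:ℝ)*φ) * gfun 0 (Real.cos φ / χ)) := by
    intro φ
    have h1 : (0:ℝ) < 1 - Real.cos φ / χ := lt_of_lt_of_le (by norm_num) (hbase φ)
    have h2 : 2 * (χ - Real.cos φ) = (2*χ) * (1 - Real.cos φ / χ) := by field_simp
    have h3 : Real.sqrt (2 * (χ - Real.cos φ)) = Real.sqrt (2*χ) * Real.sqrt (1 - Real.cos φ / χ) := by
      rw [h2, Real.sqrt_mul (by positivity)]
    have h4 : gfun 0 (Real.cos φ / χ) = (Real.sqrt (1 - Real.cos φ / χ))⁻¹ := by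
      unfold gfun
      rw [Real.sqrt_eq_rpow, ← Real.rpow_neg (le_of_lt h1)]
      norm_num
    rw [h3, h4]
    have h5 : Real.sqrt (2*χ) ≠ 0 := by positivity
    have h6 : Real.sqrt (1 - Real.cos φ / χ) ≠ 0 := by positivity
    field_simp
  -- rewrite the integral
  have hint : legendreQhalf n χ =
      (Real.sqrt (2*χ))⁻¹ * ∫ φ in (0:ℝ)..π, Real.cos ((n:ℝ)*φ) * gfun 0 (Real.cos φ / χ) := by
    rw [legendreQhalf, ← intervalIntegral.integral_const_mul]
    apply intervalIntegral.integral_congr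
    intro φ _
    have := hpt φ
    push_cast
    push_cast at this
    exact this
  -- continuity facts
  have hcos : Continuous (fun φ : ℝ => Real.cos ((n:ℝ)*φ)) := by fun_prop
  have hcontg : Continuous (fun φ : ℝ => Real.cos ((n:ℝ)*φ) * gfun 0 (Real.cos φ / χ)) :=
    hcos.mul (gfun_cont hχ 0)
  have hcontP : Continuous (fun φ : ℝ => Real.cos ((n:ℝ)*φ) * Pfun 0 n (Real.cos φ / χ)) := by
    apply hcos.mul
    unfold Pfun
    fun_prop
  -- split integral
  set E : ℝ := ∫ φ in (0:ℝ)..π,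
      (Real.cos ((n:ℝ)*φ) * gfun 0 (Real.cos φ / χ) -
        Real.cos ((n:ℝ)*φ) * Pfun 0 n (Real.cos φ / χ)) with hE
  have hsplit : (∫ φ in (0:ℝ)..π, Real.cos ((n:ℝ)*φ) * gfun 0 (Real.cos φ / χ)) =
      (∫ φ in (0:ℝ)..π, Real.cos ((n:ℝ)*φ) * Pfun 0 n (Real.cos φ / χ)) + E := by
    rw [hE, ← intervalIntegral.integral_add (hcontP.intervalIntegrable 0 π)
      ((hcontg.fun_sub hcontP).intervalIntegrable 0 π)]
    apply intervalIntegral.integral_congr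
    intro φ _
    ring
  -- compute the polynomial integral
  have hpoly : (∫ φ in (0:ℝ)..π, Real.cos ((n:ℝ)*φ) * Pfun 0 n (Real.cos φ / χ)) =
      tcoef 0 n * (1/χ)^n * (π / 2^n) := by
    have hexp : ∀ φ : ℝ, Real.cos ((n:ℝ)*φ) * Pfun 0 n (Real.cos φ / χ) =
        ∑ j ∈ Finset.range (n+1), tcoef 0 j * (1/χ)^j * (Real.cos ((n:ℝ)*φ) * (Real.cos φ)^j) := by
      intro φ
      unfold Pfun
      rw [Finset.mul_sum]
      apply Finset.sum_congr rfl
      intro j _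
      rw [div_pow]
      field_simp
      have hX : χ^j * χ⁻¹^j = 1 := by rw [← mul_pow, mul_inv_cancel₀ hχne, one_pow]
      linear_combination (-(Real.cos ((n:ℝ)*φ) * tcoef 0 j * Real.cos φ ^ j)) * hX
    rw [intervalIntegral.integral_congr (fun φ _ => hexp φ)]
    rw [intervalIntegral.integral_finset_sum (fun j _ =>
      ((continuous_const.fun_mul (Jint_cont n j)).intervalIntegrable 0 π))]
    have : ∀ j ∈ Finset.range (n+1),
        (∫ φ in (0:ℝ)..π, tcoef 0 j * (1/χ)^j * (Real.cos ((n:ℝ)*φ) * (Real.cos φ)^j)) =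
        tcoef 0 j * (1/χ)^j * Jint n j := by
      intro j _
      rw [intervalIntegral.integral_const_mul]
      rfl
    rw [Finset.sum_congr rfl this, Finset.sum_range_succ]
    rw [Finset.sum_eq_zero, (Jint_main n).2, zero_add]
    intro j hj
    rw [(Jint_main j).1 n (Finset.mem_range.1 hj), mul_zero]
  -- bound the error
  have hEbd : |E| ≤ C * (1/χ)^(n+1) * π := by
    have := intervalIntegral.norm_integral_le_of_norm_le_const
      (a := 0) (b := π) (C := C * (1/χ)^(n+1))
      (f := fun φ => Real.cos ((n:ℝ)*φ) * gfun 0 (Real.cos φ / χ) -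
        Real.cos ((n:ℝ)*φ) * Pfun 0 n (Real.cos φ / χ))
      ?_
    · rw [hE]
      calc |∫ φ in (0:ℝ)..π, (Real.cos ((n:ℝ)*φ) * gfun 0 (Real.cos φ / χ) -
            Real.cos ((n:ℝ)*φ) * Pfun 0 n (Real.cos φ / χ))|
          ≤ C * (1/χ)^(n+1) * |π - 0| := this
        _ = C * (1/χ)^(n+1) * π := by rw [sub_zero, abs_of_pos Real.pi_pos]
    · intro φ _
      show |Real.cos ((n:ℝ)*φ) * gfun 0 (Real.cos φ / χ) -
        Real.cos ((n:ℝ)*φ) * Pfun 0 n (Real.cos φ / χ)| ≤ C * (1/χ)^(n+1)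
      rw [show Real.cos ((n:ℝ)*φ) * gfun 0 (Real.cos φ / χ) -
        Real.cos ((n:ℝ)*φ) * Pfun 0 n (Real.cos φ / χ) =
        Real.cos ((n:ℝ)*φ) * (gfun 0 (Real.cos φ / χ) - Pfun 0 n (Real.cos φ / χ)) from by ring,
        abs_mul]
      have b1 : |Real.cos ((n:ℝ)*φ)| ≤ 1 := Real.abs_cos_le_one _
      have b2 : |gfun 0 (Real.cos φ / χ) - Pfun 0 n (Real.cos φ / χ)| ≤ C * (1/χ)^(n+1) := by
        calc |gfun 0 (Real.cos φ / χ) - Pfun 0 n (Real.cos φ / χ)|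
            ≤ C * |Real.cos φ / χ|^(n+1) := hCb _ (hy φ)
          _ ≤ C * (1/χ)^(n+1) := by
              apply mul_le_mul_of_nonneg_left _ hC
              apply pow_le_pow_left₀ (abs_nonneg _)
              rw [abs_div, abs_of_pos hχ0]
              gcongr
              exact Real.abs_cos_le_one φ
      calc |Real.cos ((n:ℝ)*φ)| * |gfun 0 (Real.cos φ / χ) - Pfun 0 n (Real.cos φ / χ)|
          ≤ 1 * (C * (1/χ)^(n+1)) := mul_le_mul b1 b2 (abs_nonneg _) (by norm_num)
        _ = C * (1/χ)^(n+1) := one_mul _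
  -- the prefactor
  have hpre : χ ^ ((n:ℝ) + 1/2) * (Real.sqrt (2*χ))⁻¹ = χ^n / Real.sqrt 2 := by
    rw [Real.sqrt_mul (by norm_num) χ]
    rw [Real.rpow_add hχ0, Real.rpow_natCast]
    rw [show ((1:ℝ)/2) = (1/2 : ℝ) from rfl, ← Real.sqrt_eq_rpow]
    have h5 : Real.sqrt χ ≠ 0 := by positivity
    have h6 : Real.sqrt 2 ≠ 0 := by positivity
    field_simp
  -- put everything together
  have hfinal : χ ^ ((n:ℝ) + 1/2) * legendreQhalf n χ =
      (π / 2^n * tcoef 0 n) / Real.sqrt 2 + χ^n / Real.sqrt 2 * E := by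
    rw [hint, hsplit, hpoly]
    rw [show χ ^ ((n:ℝ) + 1/2) * ((Real.sqrt (2*χ))⁻¹ *
        (tcoef 0 n * (1/χ)^n * (π / 2^n) + E)) =
        (χ ^ ((n:ℝ) + 1/2) * (Real.sqrt (2*χ))⁻¹) * (tcoef 0 n * (1/χ)^n * (π / 2^n) + E) by ring]
    rw [hpre]
    have hpow : (χ:ℝ)^n * (1/χ)^n = 1 := by
      rw [one_div, inv_pow, mul_inv_cancel₀ (by positivity)]
    linear_combination (tcoef 0 n * (π / 2^n) / Real.sqrt 2) * hpow
  rw [hfinal]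
  rw [show (π / 2^n * tcoef 0 n) / Real.sqrt 2 + χ^n / Real.sqrt 2 * E -
      (π / 2^n * tcoef 0 n) / Real.sqrt 2 = χ^n / Real.sqrt 2 * E by ring]
  rw [abs_mul]
  have hs2 : 1 ≤ Real.sqrt 2 := by
    rw [show (1:ℝ) = Real.sqrt 1 by simp]
    exact Real.sqrt_le_sqrt (by norm_num)
  have hxn : |χ^n / Real.sqrt 2| ≤ χ^n := by
    rw [abs_div, abs_of_pos (by positivity : (0:ℝ) < χ^n), abs_of_pos (by positivity)]
    rw [div_le_iff₀ (by positivity)]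
    nlinarith [pow_pos hχ0 n]
  calc |χ^n / Real.sqrt 2| * |E| ≤ χ^n * (C * (1/χ)^(n+1) * π) := by
        apply mul_le_mul hxn hEbd (abs_nonneg _) (by positivity)
    _ = C * π / χ := by
        rw [one_div, inv_pow]
        field_simp
        ring
theorem stmt7 (n : ℕ) :
    ∃ L : ℝ, 0 < L ∧
      Tendsto (fun χ : ℝ => Real.rpow χ ((n : ℝ) + 1 / 2) * legendreQhalf n χ)
        atTop (nhds L) := by
  obtain ⟨K, hK, hKb⟩ := main_est n
  refine ⟨(π / 2^n * tcoef 0 n) / Real.sqrt 2, ?_, ?_⟩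
  · have := tcoef_pos n 0
    have := Real.pi_pos
    positivity
  · rw [tendsto_iff_dist_tendsto_zero]
    apply squeeze_zero' (g := fun χ : ℝ => K / χ)
    · filter_upwards with χ using dist_nonneg
    · filter_upwards [eventually_ge_atTop (2:ℝ)] with χ hχ
      rw [Real.dist_eq]
      exact hKb χ hχ
    · exact Tendsto.div_atTop tendsto_const_nhds tendsto_id
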